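/- For every α ∈ (0,1), the profile function Φ satisfies the fractional differential equation D^α_C Φ(x) = −(1/(1+α))·x·Φ(x) for all x > 0, together with Φ(0) = 1, where D^α_C denotes the Caputo fractional derivative of order α. -/

import Mathlib

open Real MeasureTheory Set Filter Topology

noncomputable def bCoef (α : ℝ) (n : ℕ) : ℝ :=
  ∏ i ∈ Finset.range n, Real.Gamma (α * i + i + 2) / Real.Gamma (α * (i + 1) + i + 2)

/-- The profile function `Φ(x) = ∑ bₙ (−x^{1+α}/(1+α))ⁿ`. -/
noncomputable def Phi (α : ℝ) (x : ℝ) : ℝ :=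
  ∑' n : ℕ, bCoef α n * (-(x ^ (1 + α)) / (1 + α)) ^ n

/-- The Caputo fractional derivative of order `α`. -/
noncomputable def caputo (α : ℝ) (f : ℝ → ℝ) (x : ℝ) : ℝ :=
  (1 / Real.Gamma (1 - α)) * ∫ τ in (0:ℝ)..x, deriv f τ * (x - τ) ^ (-α)

/-- The normalizing constant `a₀` with `1/a₀ = 2∫₀^∞ Φ`. -/
noncomputable def a0 (α : ℝ) : ℝ := (2 * ∫ x in Set.Ioi (0:ℝ), Phi α x)⁻¹

/-- The fundamental solution `𝔈_t(x) = a₀ t^{−1/(1+α)} Φ(|x| t^{−1/(1+α)})`. -/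
noncomputable def fundSol (α t x : ℝ) : ℝ :=
  a0 α * t ^ (-1/(1+α)) * Phi α (|x| * t ^ (-1/(1+α)))

noncomputable def C1 (α : ℝ) : ℝ :=
  α * (2:ℝ) ^ (1+α) * max (∫ u in (1/2:ℝ)..1, u ^ (-(1+α)) * (1-u) ^ (α-1)) 2

noncomputable def C2 (α : ℝ) : ℝ := 2 * a0 α * C1 α

/-! Write `Φ(x) = ∑ bₙ rⁿ x^{(1+α)n}` with `r = −1/(1+α)`. Log-convexity of `Γ` gives
`b_{n+1} ≤ bₙ ((1+α)(n+1))^{−α}`, so the series is entire in `x^{1+α}` and may be differentiated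
and integrated against `(x−τ)^{−α}` term by term. Each term is then a Beta integral: the Caputo
derivative of `x^p` is `Γ(p+1)/Γ(p+1−α) x^{p−α}`, and for `p = (1+α)(n+1)` the defining recursion
`b_{n+1} Γ(p+1) = bₙ Γ(p+1−α)` turns the `(n+1)`-st term of `D^α Φ` into `r x` times the `n`-th
term of `Φ`. -/

namespace Real

theorem rpow_mul_Gamma_add_one_sub_le_Gamma_add_one {x α : ℝ} (hx : 0 < x) (hα₀ : 0 < α)
    (hα₁ : α < 1) : x ^ α * Gamma (x + 1 - α) ≤ Gamma (x + 1) := by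
  have hlogConvex := Gamma_mul_add_mul_le_rpow_Gamma_mul_rpow_Gamma hx (by linarith : 0 < x + 1)
    hα₀ (sub_pos.2 hα₁) (add_sub_cancel α 1)
  rw [show α * x + (1 - α) * (x + 1) = x + 1 - α by ring] at hlogConvex
  calc x ^ α * Gamma (x + 1 - α)
      ≤ x ^ α * (Gamma x ^ α * Gamma (x + 1) ^ (1 - α)) := by gcongr
    _ = (x * Gamma x) ^ α * Gamma (x + 1) ^ (1 - α) := by
        rw [mul_rpow hx.le (Gamma_pos_of_pos hx).le]; ring
    _ = Gamma (x + 1) := by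
        rw [← Gamma_add_one hx.ne', ← rpow_add (Gamma_pos_of_pos (by linarith)), add_sub_cancel,
          rpow_one]

theorem intervalIntegrable_rpow_mul_sub_rpow {a b x : ℝ} (ha : 0 < a) (hb : 0 < b) (hx : 0 < x) :
    IntervalIntegrable (fun t => t ^ (a - 1) * (x - t) ^ (b - 1)) volume 0 x := by
  have hleft : IntervalIntegrable (fun t => t ^ (a - 1) * (x - t) ^ (b - 1)) volume 0 (x / 2) := by
    refine (intervalIntegral.intervalIntegrable_rpow' (by linarith)).mul_continuousOn
      (ContinuousOn.rpow_const (by fun_prop) fun t ht => Or.inl ?_)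
    rw [uIcc_of_le (by linarith)] at ht
    linarith [ht.2]
  have hright : IntervalIntegrable (fun t => t ^ (a - 1) * (x - t) ^ (b - 1)) volume (x / 2) x := by
    refine IntervalIntegrable.continuousOn_mul ?_
      (ContinuousOn.rpow_const (by fun_prop) fun t ht => Or.inl ?_)
    · have hreflected := (intervalIntegral.intervalIntegrable_rpow' (by linarith : -1 < b - 1)
        (a := 0) (b := x / 2)).comp_sub_left x
      rw [sub_zero, sub_half] at hreflected
      exact hreflected.symm
    · rw [uIcc_of_le (by linarith)] at ht
      linarith [ht.1]
  exact hleft.trans hright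

theorem integral_rpow_mul_sub_rpow {a b x : ℝ} (ha : 0 < a) (hb : 0 < b) (hx : 0 < x) :
    ∫ t in (0 : ℝ)..x, t ^ (a - 1) * (x - t) ^ (b - 1)
      = Gamma a * Gamma b / Gamma (a + b) * x ^ (a + b - 1) := by
  have hcomplex := Complex.betaIntegral_scaled a b hx
  rw [Complex.betaIntegral_eq_Gamma_mul_div _ _ (by simpa using ha) (by simpa using hb)] at hcomplex
  have hcast : ∀ t ∈ uIoc 0 x, ((t ^ (a - 1) * (x - t) ^ (b - 1) : ℝ) : ℂ)
      = (t : ℂ) ^ ((a : ℂ) - 1) * ((x : ℂ) - t) ^ ((b : ℂ) - 1) := by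
    intro t ht
    rw [uIoc_of_le hx.le] at ht
    push_cast
    rw [Complex.ofReal_cpow ht.1.le, Complex.ofReal_cpow (sub_nonneg.2 ht.2)]
    push_cast; rfl
  apply Complex.ofReal_injective
  rw [intervalIntegral.integral_ofReal.symm, intervalIntegral.integral_congr_ae
    (ae_of_all _ hcast), hcomplex, ← Complex.ofReal_add, Complex.Gamma_ofReal,
    Complex.Gamma_ofReal, Complex.Gamma_ofReal, Complex.ofReal_mul, Complex.ofReal_cpow hx.le]
  push_cast
  ring

end Real

theorem integral_tsum_rpow_mul_sub_rpow {c a : ℕ → ℝ} {b x : ℝ} (ha : ∀ n, 0 < a n) (hb : 0 < b)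
    (hx : 0 < x)
    (hsum : Summable fun n => c n * (Gamma (a n) * Gamma b / Gamma (a n + b) * x ^ (a n + b - 1))) :
    ∫ τ in (0 : ℝ)..x, (∑' n, c n * τ ^ (a n - 1)) * (x - τ) ^ (b - 1)
      = ∑' n, c n * (Gamma (a n) * Gamma b / Gamma (a n + b) * x ^ (a n + b - 1)) := by
  have hkernel_int n := (intervalIntegrable_iff_integrableOn_Ioc_of_le hx.le).1
    (intervalIntegrable_rpow_mul_sub_rpow (ha n) hb hx)
  have hkernel n : ∫ τ in Ioc 0 x, τ ^ (a n - 1) * (x - τ) ^ (b - 1)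
      = Gamma (a n) * Gamma b / Gamma (a n + b) * x ^ (a n + b - 1) := by
    rw [← intervalIntegral.integral_of_le hx.le, integral_rpow_mul_sub_rpow (ha n) hb hx]
  have hnorm n : ∫ τ in Ioc 0 x, ‖c n * (τ ^ (a n - 1) * (x - τ) ^ (b - 1))‖
      = |c n * (Gamma (a n) * Gamma b / Gamma (a n + b) * x ^ (a n + b - 1))| := by
    have hnonneg : 0 ≤ Gamma (a n) * Gamma b / Gamma (a n + b) * x ^ (a n + b - 1) := by
      have := Gamma_pos_of_pos (ha n); have := Gamma_pos_of_pos hb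
      have := Gamma_pos_of_pos (add_pos (ha n) hb); positivity
    rw [abs_mul, abs_of_nonneg hnonneg, ← hkernel, ← integral_const_mul]
    refine setIntegral_congr_fun measurableSet_Ioc fun τ hτ => ?_
    rw [norm_mul, Real.norm_eq_abs, Real.norm_of_nonneg
      (mul_nonneg (rpow_nonneg hτ.1.le _) (rpow_nonneg (sub_nonneg.2 hτ.2) _))]
  rw [intervalIntegral.integral_of_le hx.le]
  simp_rw [← tsum_mul_right, mul_assoc]
  rw [← integral_tsum_of_summable_integral_norm (fun n => (hkernel_int n).const_mul (c n))
    (by simpa only [hnorm] using hsum.abs)]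
  simp_rw [integral_const_mul, hkernel]

theorem hasDerivAt_tsum_mul_pow {a : ℕ → ℝ}
    (ha : ∀ s, 0 ≤ s → Summable fun n : ℕ => ((n : ℝ) + 1) * |a n| * s ^ n) (y : ℝ) :
    HasDerivAt (fun z => ∑' n, a n * z ^ n) (∑' n : ℕ, ((n : ℝ) + 1) * a (n + 1) * y ^ n) y := by
  set R := |y| + 1
  have hR : 0 < R := by positivity
  have hy : y ∈ Metric.ball (0 : ℝ) R := by simp [R]
  have hbound n z (hz : z ∈ Metric.ball (0 : ℝ) R) :
      ‖a n * (n * z ^ (n - 1))‖ ≤ |a n| * (n * R ^ (n - 1)) := by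
    rw [mem_ball_zero_iff] at hz
    rw [norm_mul, norm_mul, norm_pow, Real.norm_eq_abs, Real.norm_natCast]
    gcongr
  have hu : Summable fun n => |a n| * (n * R ^ (n - 1)) := by
    refine Summable.of_nonneg_of_le (fun n => by positivity) (fun n => ?_)
      ((ha R hR.le).mul_left R⁻¹)
    cases n with
    | zero => simp only [CharP.cast_eq_zero, zero_mul, mul_zero]; positivity
    | succ k =>
      calc |a (k + 1)| * ((k + 1 : ℕ) * R ^ (k + 1 - 1))
          ≤ ((k + 1 : ℕ) + 1) * |a (k + 1)| * R ^ k := by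
            rw [Nat.add_sub_cancel]
            nlinarith [mul_nonneg (abs_nonneg (a (k + 1))) (pow_pos hR k).le]
        _ = R⁻¹ * (((k + 1 : ℕ) + 1) * |a (k + 1)| * R ^ (k + 1)) := by
            rw [pow_succ]; field_simp
  have hsummable_at_y : Summable fun n => a n * y ^ n :=
    .of_norm_bounded (ha |y| (abs_nonneg y)) fun n => by
      rw [norm_mul, norm_pow, Real.norm_eq_abs, Real.norm_eq_abs]
      nlinarith [mul_nonneg (abs_nonneg (a n)) (pow_nonneg (abs_nonneg y) n),
        (Nat.cast_nonneg n : (0 : ℝ) ≤ n)]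
  have hderiv := hasDerivAt_tsum_of_isPreconnected hu Metric.isOpen_ball
    (convex_ball (0 : ℝ) R).isPreconnected (fun n z _ => (hasDerivAt_pow n z).const_mul (a n))
    hbound hy hsummable_at_y hy
  rw [tsum_eq_zero_add' ((summable_nat_add_iff 1).2 (.of_norm_bounded hu (hbound · y hy))),
    CharP.cast_eq_zero, zero_mul, mul_zero, zero_add] at hderiv
  exact hderiv.congr_deriv (tsum_congr fun n => by rw [Nat.add_sub_cancel]; push_cast; ring)

section bCoef

variable {α : ℝ}

theorem bCoef_succ (n : ℕ) : bCoef α (n + 1)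
    = bCoef α n * (Gamma ((1 + α) * (n + 1) + 1 - α) / Gamma ((1 + α) * (n + 1) + 1)) := by
  rw [bCoef, Finset.prod_range_succ, ← bCoef]
  congr 3 <;> ring

theorem bCoef_pos (hα : -1 < α) (n : ℕ) : 0 < bCoef α n :=
  Finset.prod_pos fun i _ => div_pos (Gamma_pos_of_pos (by nlinarith [i.cast_nonneg' (α := ℝ)]))
    (Gamma_pos_of_pos (by nlinarith [i.cast_nonneg' (α := ℝ)]))

theorem bCoef_succ_mul_Gamma (hα : -1 < α) (n : ℕ) :
    bCoef α (n + 1) * Gamma ((1 + α) * (n + 1) + 1)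
      = bCoef α n * Gamma ((1 + α) * (n + 1) + 1 - α) := by
  have hpos : 0 < (1 + α) * (n + 1) + 1 := by nlinarith [n.cast_nonneg' (α := ℝ)]
  rw [bCoef_succ, mul_assoc, div_mul_cancel₀ _ (Gamma_pos_of_pos hpos).ne']

theorem rpow_mul_bCoef_succ_le (hα₀ : 0 < α) (hα₁ : α < 1) (n : ℕ) :
    ((1 + α) * (n + 1)) ^ α * bCoef α (n + 1) ≤ bCoef α n := by
  have hp : 0 < (1 + α) * (n + 1) := by positivity
  have hΓ := Gamma_pos_of_pos (by linarith : 0 < (1 + α) * (n + 1) + 1)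
  refine le_of_mul_le_mul_right ?_ hΓ
  calc ((1 + α) * (n + 1)) ^ α * bCoef α (n + 1) * Gamma ((1 + α) * (n + 1) + 1)
      = bCoef α n * (((1 + α) * (n + 1)) ^ α * Gamma ((1 + α) * (n + 1) + 1 - α)) := by
        rw [mul_assoc, bCoef_succ_mul_Gamma (by linarith)]; ring
    _ ≤ bCoef α n * Gamma ((1 + α) * (n + 1) + 1) := by
        gcongr
        · exact (bCoef_pos (by linarith) n).le
        · exact rpow_mul_Gamma_add_one_sub_le_Gamma_add_one hp hα₀ hα₁

theorem summable_succ_mul_bCoef_mul_pow (hα₀ : 0 < α) (hα₁ : α < 1) {s : ℝ} (hs : 0 ≤ s) :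
    Summable fun n : ℕ => ((n : ℝ) + 1) * bCoef α n * s ^ n := by
  refine summable_of_ratio_norm_eventually_le (by norm_num : (1 / 2 : ℝ) < 1) ?_
  have hgrowth : Tendsto (fun n : ℕ => ((1 + α) * (n + 1)) ^ α) atTop atTop :=
    (tendsto_rpow_atTop hα₀).comp <| (tendsto_atTop_add_const_right _ 1
      tendsto_natCast_atTop_atTop).const_mul_atTop (by linarith)
  filter_upwards [hgrowth.eventually_ge_atTop (4 * s)] with n hn
  have hbn : 0 ≤ bCoef α n := (bCoef_pos (by linarith) n).le
  have hbn1 : 0 ≤ bCoef α (n + 1) := (bCoef_pos (by linarith) (n + 1)).le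
  have hratio : 4 * s * bCoef α (n + 1) ≤ bCoef α n :=
    (mul_le_mul_of_nonneg_right hn hbn1).trans (rpow_mul_bCoef_succ_le hα₀ hα₁ n)
  rw [Real.norm_of_nonneg (by positivity), Real.norm_of_nonneg (by positivity)]
  push_cast
  rw [pow_succ]
  nlinarith [mul_le_mul_of_nonneg_right hratio (by positivity : (0 : ℝ) ≤ (n + 2) * s ^ n),
    mul_nonneg hbn (pow_nonneg hs n), (n.cast_nonneg' : (0 : ℝ) ≤ n)]

theorem summable_bCoef_mul_pow (hα₀ : 0 < α) (hα₁ : α < 1) (w : ℝ) :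
    Summable fun n : ℕ => bCoef α n * w ^ n := by
  refine summable_abs_iff.1 <| .of_nonneg_of_le (fun n => abs_nonneg _) (fun n => ?_)
    (summable_succ_mul_bCoef_mul_pow hα₀ hα₁ (abs_nonneg w))
  rw [abs_mul, abs_pow, abs_of_pos (bCoef_pos (by linarith) n)]
  nlinarith [mul_nonneg (bCoef_pos (by linarith : -1 < α) n).le (pow_nonneg (abs_nonneg w) n),
    (n.cast_nonneg' : (0 : ℝ) ≤ n)]

end bCoef

theorem Phi_zero (α : ℝ) : Phi α 0 = 1 := by
  have hbase : -((0 : ℝ) ^ (1 + α)) / (1 + α) = 0 := by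
    rcases eq_or_ne (1 + α) 0 with h | h <;> simp [h]
  rw [Phi, hbase, tsum_eq_single 0 fun n hn => by simp [hn]]
  simp [bCoef]

theorem Phi_eq_tsum (α x : ℝ) :
    Phi α x = ∑' n : ℕ, bCoef α n * (-(1 + α)⁻¹ * x ^ (1 + α)) ^ n := by
  rw [Phi]
  congr 1 with n
  ring

theorem hasDerivAt_Phi {α τ : ℝ} (hα₀ : 0 < α) (hα₁ : α < 1) (hτ : 0 < τ) :
    HasDerivAt (Phi α) (∑' m : ℕ, (1 + α) * (m + 1) * bCoef α (m + 1) * (-(1 + α)⁻¹) ^ (m + 1)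
      * τ ^ ((1 + α) * (m + 1) - 1)) τ := by
  set r : ℝ := -(1 + α)⁻¹
  have hPhi : Phi α = (fun z => ∑' n, bCoef α n * r ^ n * z ^ n) ∘ (· ^ (1 + α)) := by
    funext x
    simp only [Phi_eq_tsum, Function.comp, mul_pow, mul_assoc, r]
  have hseries := hasDerivAt_tsum_mul_pow (a := fun n => bCoef α n * r ^ n) (fun s hs => by
    simpa only [abs_mul, abs_pow, abs_of_pos (bCoef_pos (by linarith : -1 < α) _), mul_pow,
      mul_assoc] using summable_succ_mul_bCoef_mul_pow hα₀ hα₁ (mul_nonneg (abs_nonneg r) hs))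
    (τ ^ (1 + α))
  have hinner := hasDerivAt_rpow_const (p := 1 + α) (Or.inl hτ.ne')
  rw [hPhi]
  refine (hseries.comp τ hinner).congr_deriv ?_
  rw [← tsum_mul_right]
  refine tsum_congr fun m => ?_
  have hexp : (τ ^ (1 + α)) ^ m * τ ^ (1 + α - 1) = τ ^ ((1 + α) * (m + 1) - 1) := by
    rw [← rpow_natCast, ← rpow_mul hτ.le, ← rpow_add hτ]; ring_nf
  rw [← hexp]
  ring

theorem caputo_Phi {α x : ℝ} (hα₀ : 0 < α) (hα₁ : α < 1) (hx : 0 < x) :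
    caputo α (Phi α) x = -(1 / (1 + α)) * (x * Phi α x) := by
  set r : ℝ := -(1 + α)⁻¹
  have hp (m : ℕ) : 0 < (1 + α) * (m + 1) := by positivity
  have hintegrand : ∀ τ ∈ uIoc 0 x, deriv (Phi α) τ * (x - τ) ^ (-α)
      = (∑' m : ℕ, (1 + α) * (m + 1) * bCoef α (m + 1) * r ^ (m + 1)
          * τ ^ ((1 + α) * (m + 1) - 1)) * (x - τ) ^ (1 - α - 1) := by
    intro τ hτ
    rw [(hasDerivAt_Phi hα₀ hα₁ (uIoc_of_le hx.le ▸ hτ).1).deriv, sub_sub_cancel_left]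
  have hterm (m : ℕ) : (1 + α) * (m + 1) * bCoef α (m + 1) * r ^ (m + 1)
      * (Gamma ((1 + α) * (m + 1)) * Gamma (1 - α) / Gamma ((1 + α) * (m + 1) + (1 - α))
        * x ^ ((1 + α) * (m + 1) + (1 - α) - 1))
      = Gamma (1 - α) * (r * x) * (bCoef α m * (r * x ^ (1 + α)) ^ m) := by
    have hΓp := Gamma_pos_of_pos (by linarith [hp m] : 0 < (1 + α) * (m + 1) + (1 - α))
    have hcoef := bCoef_succ_mul_Gamma (by linarith : -1 < α) m
    rw [Gamma_add_one (hp m).ne', add_sub_assoc] at hcoef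
    have hxpow : x ^ ((1 + α) * (m + 1) + (1 - α) - 1) = x * (x ^ (1 + α)) ^ m := by
      rw [← rpow_natCast, ← rpow_mul hx.le, ← rpow_one_add' hx.le (by positivity)]
      ring_nf
    calc _ = r ^ (m + 1) * x * (x ^ (1 + α)) ^ m * Gamma (1 - α)
          * (bCoef α (m + 1) * ((1 + α) * (m + 1) * Gamma ((1 + α) * (m + 1))))
          / Gamma ((1 + α) * (m + 1) + (1 - α)) := by rw [hxpow]; ring
      _ = _ := by rw [hcoef]; field_simp; ring
  rw [caputo, intervalIntegral.integral_congr_ae (ae_of_all _ hintegrand),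
    integral_tsum_rpow_mul_sub_rpow hp (by linarith) hx (by
      simpa only [hterm] using (summable_bCoef_mul_pow hα₀ hα₁ _).mul_left _),
    tsum_congr hterm, tsum_mul_left, Phi_eq_tsum]
  have hΓ : Gamma (1 - α) ≠ 0 := (Gamma_pos_of_pos (by linarith)).ne'
  simp only [r]
  field_simp

/-- For every `α ∈ (0,1)`, the profile function `Φ` satisfies the fractional differential
equation `D^α_C Φ(x) = −(1/(1+α))·x·Φ(x)` for all `x > 0`, together with `Φ(0) = 1`. -/
theorem stmt0 (α : ℝ) (hα : α ∈ Set.Ioo (0:ℝ) 1) :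
    Phi α 0 = 1 ∧ ∀ x > (0:ℝ), caputo α (Phi α) x = -(1/(1+α)) * (x * Phi α x) :=
  ⟨Phi_zero α, fun _ hx => caputo_Phi hα.1 hα.2 hx⟩
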